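/- Let κ be a regular uncountable cardinal and let U be a uniform ultrafilter on κ. If U has an almost-decreasing generating sequence, then U is κ-complete, i.e. U is closed under intersections of fewer than κ many of its members; in particular U is a κ-complete nonprincipal ultrafilter on κ, so κ is a measurable cardinal. -/

import Mathlib

universe u

open Cardinal Set

/-- `A ⊆* B` below the cardinal `κ`: the difference `A \ B` is bounded below `κ`
(where `κ` is identified with its set of ordinals `Set.Iio κ.ord`). -/
def AlmostSub (κ : Cardinal.{u}) (A B : Set Ordinal.{u}) : Prop :=
  ∃ β, β < κ.ord ∧ A \ B ⊆ Set.Iio β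

/-- An ultrafilter on the cardinal `κ`, identified with its set of ordinals `Set.Iio κ.ord`. -/
structure UltrafilterOn (κ : Cardinal.{u}) : Type (u + 1) where
  sets : Set (Set Ordinal.{u})
  sets_subset : ∀ A ∈ sets, A ⊆ Set.Iio κ.ord
  univ_mem : Set.Iio κ.ord ∈ sets
  superset_mem : ∀ A ∈ sets, ∀ B, B ⊆ Set.Iio κ.ord → A ⊆ B → B ∈ sets
  inter_mem : ∀ A ∈ sets, ∀ B ∈ sets, A ∩ B ∈ sets
  empty_not_mem : ∅ ∉ sets
  mem_or_compl_mem : ∀ A, A ⊆ Set.Iio κ.ord → A ∈ sets ∨ Set.Iio κ.ord \ A ∈ sets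

namespace UltrafilterOn

variable {κ : Cardinal.{u}}

/-- A uniform ultrafilter: every member has cardinality `κ`. -/
def IsUniform (U : UltrafilterOn κ) : Prop :=
  ∀ A ∈ U.sets, #A = Cardinal.lift.{u + 1, u} κ

/-- `κ`-completeness: `U` is closed under intersections of fewer than `κ` many of its members. -/
def IsComplete (U : UltrafilterOn κ) : Prop :=
  ∀ S : Set (Set Ordinal.{u}), S.Nonempty → S ⊆ U.sets →
    #S < Cardinal.lift.{u + 1, u} κ → ⋂₀ S ∈ U.sets

/-- Nonprincipal: no singleton is a member. -/
def IsNonprincipal (U : UltrafilterOn κ) : Prop :=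
  ∀ β : Ordinal.{u}, {β} ∉ U.sets

/-- A base for `U`: a subfamily `B ⊆ U` such that every member of `U` almost contains
a member of `B`. -/
def IsBase (U : UltrafilterOn κ) (B : Set (Set Ordinal.{u})) : Prop :=
  B ⊆ U.sets ∧ ∀ X ∈ U.sets, ∃ Y ∈ B, AlmostSub κ Y X

/-- The character of `U`: the least cardinality of a base for `U`. -/
noncomputable def char (U : UltrafilterOn κ) : Cardinal.{u + 1} :=
  sInf {c | ∃ B, U.IsBase B ∧ #B = c}

/-- `⟨A i : i < θord⟩` is an almost-decreasing generating sequence for `U`: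
its entries are members of `U`, it is `⊆*`-decreasing, and its range is a base for `U`. -/
def IsADGenSeq (U : UltrafilterOn κ) (θord : Ordinal.{u})
    (A : Ordinal.{u} → Set Ordinal.{u}) : Prop :=
  (∀ i, i < θord → A i ∈ U.sets) ∧
  (∀ i j, i ≤ j → j < θord → AlmostSub κ (A j) (A i)) ∧
  U.IsBase (A '' Set.Iio θord)

/-- A normal measure on `κ`: a `κ`-complete nonprincipal ultrafilter such that every
function regressive on a member of `U` is constant on a member of `U`. -/
def IsNormalMeasure (U : UltrafilterOn κ) : Prop :=
  U.IsComplete ∧ U.IsNonprincipal ∧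
  ∀ f : Ordinal.{u} → Ordinal.{u},
    (∃ X ∈ U.sets, ∀ α ∈ X, f α < α) → ∃ Y ∈ U.sets, ∃ c, ∀ α ∈ Y, f α = c

end UltrafilterOn

/-- `κ` is a measurable cardinal: it is uncountable and carries a `κ`-complete
nonprincipal ultrafilter. -/
def IsMeasurableCard (κ : Cardinal.{u}) : Prop :=
  ℵ₀ < κ ∧ ∃ U : UltrafilterOn κ, U.IsComplete ∧ U.IsNonprincipal

/-- `f <* g`: eventual (pointwise) domination below `ρord`. -/
def EvDomLt (ρord : Ordinal.{u}) (f g : Ordinal.{u} → Ordinal.{u}) : Prop :=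
  ∃ i₀, i₀ < ρord ∧ ∀ i, i₀ ≤ i → i < ρord → f i < g i

/-- Membership in the product `∏_{i < ρord} lam i` (of cardinals `lam i`). -/
def InProd (ρord : Ordinal.{u}) (lam : Ordinal.{u} → Cardinal.{u})
    (f : Ordinal.{u} → Ordinal.{u}) : Prop :=
  ∀ i, i < ρord → f i < (lam i).ord

/-- `⟨g η : η < ν⟩` is a scale of length `ν` in `∏_{i < ρord} lam i`:
a `<*`-increasing and `<*`-cofinal sequence in the product. -/
def IsScale (ρord : Ordinal.{u}) (lam : Ordinal.{u} → Cardinal.{u}) (ν : Cardinal.{u})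
    (g : Ordinal.{u} → Ordinal.{u} → Ordinal.{u}) : Prop :=
  (∀ η, η < ν.ord → InProd ρord lam (g η)) ∧
  (∀ η₁ η₂, η₁ < η₂ → η₂ < ν.ord → EvDomLt ρord (g η₁) (g η₂)) ∧
  ∀ f, InProd ρord lam f → ∃ η, η < ν.ord ∧ EvDomLt ρord f (g η)

/-- `supBelow μ i = sup_{i' < i} μ i'`. -/
noncomputable def supBelow (μ : Ordinal.{u} → Cardinal.{u}) (i : Ordinal.{u}) : Cardinal.{u} :=
  sSup {c | ∃ i', i' < i ∧ c = μ i'}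

/-! Given fewer than `κ` members of `U`, each almost contains some entry `A i` of the sequence.
If these indices are bounded by some `j < θ`, then `A j` is almost contained in all of the
members, with a common bound by regularity of `κ`, so a tail of `A j` lies in their
intersection. If instead the indices were cofinal in `θ`, every member of `U` would almost
contain one of the fewer than `κ` sets they pick out. But fewer than `κ` unbounded subsets of
a regular `κ` can be split by a single set `Z`: each of them meets both `Z` and its complement
unboundedly. Whichever of `Z` and its complement lies in `U` gives a contradiction. -/

universe v

theorem AlmostSub.trans {κ : Cardinal.{u}} {A B C : Set Ordinal.{u}} (hAB : AlmostSub κ A B)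
    (hBC : AlmostSub κ B C) : AlmostSub κ A C := by
  obtain ⟨β, hβ, hAB⟩ := hAB
  obtain ⟨γ, hγ, hBC⟩ := hBC
  refine ⟨max β γ, max_lt hβ hγ, fun x hx => ?_⟩
  by_cases hxB : x ∈ B
  · exact lt_max_of_lt_right (mem_Iio.1 (hBC ⟨hxB, hx.2⟩))
  · exact lt_max_of_lt_left (mem_Iio.1 (hAB ⟨hx.1, hxB⟩))

theorem not_almostSub_of_forall_exists_ge {κ : Cardinal.{u}} {A B : Set Ordinal.{u}}
    (h : ∀ d < κ.ord, ∃ x ∈ A \ B, d ≤ x) : ¬AlmostSub κ A B := by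
  rintro ⟨d, hd, hAB⟩
  obtain ⟨x, hx, hdx⟩ := h d hd
  exact (hAB hx).not_ge hdx

namespace Cardinal.IsRegular

variable {κ : Cardinal.{u}}

theorem iSup_lt_ord (hκ : κ.IsRegular) {ι : Type v} {f : ι → Ordinal.{u}}
    (hι : Cardinal.lift.{u} #ι < Cardinal.lift.{v} κ) (hf : ∀ i, f i < κ.ord) : ⨆ i, f i < κ.ord :=
  Ordinal.lift_iSup_lt_of_lt_cof (by rwa [← Ordinal.lift_cof, hκ.cof_ord]) hf

theorem exists_step_forall_inter_Ico_nonempty (hκ : κ.IsRegular) {ι : Type v}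
    (hι : Cardinal.lift.{u} #ι < Cardinal.lift.{v} κ) {A : ι → Set Ordinal.{u}}
    (hA : ∀ i, ∀ d < κ.ord, (A i ∩ Ico d κ.ord).Nonempty) :
    ∃ g : Ordinal.{u} → Ordinal.{u}, ∀ d < κ.ord,
      d < g d ∧ g d < κ.ord ∧ ∀ i, (A i ∩ Ico d (g d)).Nonempty := by
  have hlim := isSuccLimit_ord hκ.aleph0_le
  refine ⟨fun d => max d (⨆ i, sInf (A i ∩ Ico d κ.ord)) + 1, fun d hd => ?_⟩
  have hmem i : sInf (A i ∩ Ico d κ.ord) ∈ A i ∩ Ico d κ.ord := csInf_mem (hA i d hd)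
  have hsup : ⨆ i, sInf (A i ∩ Ico d κ.ord) < κ.ord := hκ.iSup_lt_ord hι fun i => (hmem i).2.2
  refine ⟨Order.lt_add_one_iff.2 (le_max_left _ _), hlim.add_one_lt (max_lt hd hsup), fun i =>
    ⟨_, (hmem i).1, (hmem i).2.1, Order.lt_add_one_iff.2 (le_max_of_le_right ?_)⟩⟩
  exact le_ciSup ⟨κ.ord, by rintro _ ⟨j, rfl⟩; exact (hmem j).2.2.le⟩ i

theorem exists_seq_map_le_of_lt (hκ : κ.IsRegular) {h : Ordinal.{u} → Ordinal.{u}}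
    (hh : ∀ d < κ.ord, h d < κ.ord) :
    ∃ δ : Ordinal.{u} → Ordinal.{u}, (∀ α < κ.ord, α ≤ δ α ∧ δ α < κ.ord) ∧
      ∀ β α, β < α → α < κ.ord → h (δ β) ≤ δ α := by
  let δ : Ordinal.{u} → Ordinal.{u} :=
    Ordinal.lt_wf.fix fun α IH => max α (⨆ β : Iio α, h (IH β β.2))
  have hδ α : δ α = max α (⨆ β : Iio α, h (δ β)) := Ordinal.lt_wf.fix_eq _ α
  have hlt α (hα : α < κ.ord) : δ α < κ.ord := by
    induction α using WellFoundedLT.induction with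
    | _ α IH =>
      rw [hδ]
      refine max_lt hα (hκ.iSup_lt_ord ?_ fun β => hh _ (IH β β.2 (β.2.trans hα)))
      rw [mk_Iio_ordinal, lift_lift, lift_lt]
      exact lt_ord.1 hα
  refine ⟨δ, fun α hα => ⟨hδ α ▸ le_max_left _ _, hlt α hα⟩, fun β α hβα _ => ?_⟩
  rw [hδ α]
  exact le_max_of_le_right (Ordinal.le_iSup (fun γ : Iio α => h (δ γ)) ⟨β, hβα⟩)

theorem exists_not_almostSub_and_not_almostSub_compl (hκ : κ.IsRegular) {ι : Type v}
    (hι : Cardinal.lift.{u} #ι < Cardinal.lift.{v} κ) {A : ι → Set Ordinal.{u}}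
    (hA : ∀ i, ∀ d < κ.ord, (A i ∩ Ico d κ.ord).Nonempty) :
    ∃ Z ⊆ Iio κ.ord, ∀ i, ¬AlmostSub κ (A i) (Iio κ.ord \ Z) ∧ ¬AlmostSub κ (A i) Z := by
  obtain ⟨g, hg⟩ := hκ.exists_step_forall_inter_Ico_nonempty hι hA
  obtain ⟨δ, hδ, hδg⟩ :=
    hκ.exists_seq_map_le_of_lt (h := g ∘ g) fun d hd => (hg _ (hg d hd).2.1).2.1
  -- `Z` takes every block `[δ α, g (δ α))`; the gaps `[g (δ α), g (g (δ α)))` avoid `Z`.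
  refine ⟨{x | ∃ α < κ.ord, x ∈ Ico (δ α) (g (δ α))}, ?_, fun i => ⟨?_, ?_⟩⟩
  · rintro x ⟨α, hα, -, hx⟩
    exact hx.trans (hg _ (hδ α hα).2).2.1
  · refine not_almostSub_of_forall_exists_ge fun d hd => ?_
    obtain ⟨x, hxA, hx⟩ := (hg _ (hδ d hd).2).2.2 i
    exact ⟨x, ⟨hxA, fun hxZ => hxZ.2 ⟨d, hd, hx⟩⟩, (hδ d hd).1.trans hx.1⟩
  · refine not_almostSub_of_forall_exists_ge fun d hd => ?_
    have hgd := hg _ (hδ d hd).2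
    obtain ⟨y, hyA, hy⟩ := (hg _ hgd.2.1).2.2 i
    refine ⟨y, ⟨hyA, ?_⟩, (hδ d hd).1.trans (hgd.1.le.trans hy.1)⟩
    rintro ⟨α, hα, hyα⟩
    rcases lt_trichotomy α d with hαd | rfl | hdα
    · have := (hg _ (hg _ (hδ α hα).2).2.1).1.le.trans (hδg α d hαd hd)
      exact (hyα.2.trans_le (this.trans (hgd.1.le.trans hy.1))).false
    · exact (hyα.2.trans_le hy.1).false
    · exact (hy.2.trans_le ((hδg d α hdα hα).trans hyα.1)).false

end Cardinal.IsRegular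

namespace UltrafilterOn

variable {κ : Cardinal.{u}} {U : UltrafilterOn κ}

theorem nonempty_of_mem {A : Set Ordinal.{u}} (hA : A ∈ U.sets) : A.Nonempty :=
  nonempty_iff_ne_empty.2 fun h => U.empty_not_mem (h ▸ hA)

namespace IsUniform

theorem Ico_mem (hU : U.IsUniform) {d : Ordinal.{u}} (hd : d < κ.ord) : Ico d κ.ord ∈ U.sets := by
  have hsmall : #(Iio d) < Cardinal.lift.{u + 1} κ := by
    rw [Cardinal.mk_Iio_ordinal, Cardinal.lift_lt]
    exact Cardinal.lt_ord.1 hd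
  rcases U.mem_or_compl_mem (Iio d) (Iio_subset_Iio hd.le) with h | h
  · exact absurd (hU _ h) hsmall.ne
  · convert h using 1
    ext x
    simp

theorem inter_Ico_nonempty (hU : U.IsUniform) {A : Set Ordinal.{u}} (hA : A ∈ U.sets)
    {d : Ordinal.{u}} (hd : d < κ.ord) : (A ∩ Ico d κ.ord).Nonempty :=
  nonempty_of_mem (U.inter_mem _ hA _ (hU.Ico_mem hd))

theorem isNonprincipal (hU : U.IsUniform) (hκ : 1 < κ) : U.IsNonprincipal := fun β hβ => by
  have := hU _ hβ
  rw [Cardinal.mk_singleton] at this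
  exact hκ.ne (by simpa using this)

theorem sInter_mem_of_almostSub (hU : U.IsUniform) (hκ : κ.IsRegular)
    {S : Set (Set Ordinal.{u})} (hSne : S.Nonempty) (hSU : S ⊆ U.sets)
    (hS : #S < Cardinal.lift.{u + 1} κ) {Y : Set Ordinal.{u}} (hY : Y ∈ U.sets)
    (hYS : ∀ X ∈ S, AlmostSub κ Y X) : ⋂₀ S ∈ U.sets := by
  choose b hbκ hb using fun X : S => hYS X X.2
  have hβ : ⨆ X, b X < κ.ord := hκ.iSup_lt_ord (by rwa [Cardinal.lift_id'.{u, u + 1}]) hbκ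
  obtain ⟨X₀, hX₀⟩ := hSne
  refine U.superset_mem _ (U.inter_mem _ hY _ (hU.Ico_mem hβ)) _
    (fun x hx => U.sets_subset X₀ (hSU hX₀) (hx X₀ hX₀)) ?_
  rintro x ⟨hxY, hxβ, -⟩ X hX
  by_contra hxX
  have hbX : b ⟨X, hX⟩ ≤ ⨆ X, b X := le_ciSup ⟨κ.ord, by rintro _ ⟨X, rfl⟩; exact (hbκ X).le⟩ _
  exact (hb ⟨X, hX⟩ ⟨hxY, hxX⟩ : x < _).not_ge (hbX.trans hxβ)

end IsUniform

namespace IsADGenSeq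

variable {θ : Ordinal.{u}} {A : Ordinal.{u} → Set Ordinal.{u}}

theorem exists_forall_le (hA : U.IsADGenSeq θ A) (hκ : κ.IsRegular) (hU : U.IsUniform)
    {ι : Type v} (hι : Cardinal.lift.{u} #ι < Cardinal.lift.{v} κ) {f : ι → Ordinal.{u}}
    (hf : ∀ i, f i < θ) : ∃ j < θ, ∀ i, f i ≤ j := by
  obtain ⟨hmem, hdec, -, hbase⟩ := hA
  by_contra! hcof
  have hsmall W (hW : W ∈ U.sets) : ∃ i, AlmostSub κ (A (f i)) W := by
    obtain ⟨_, ⟨j, hj, rfl⟩, hjW⟩ := hbase W hW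
    obtain ⟨i, hi⟩ := hcof j hj
    exact ⟨i, (hdec j (f i) hi.le (hf i)).trans hjW⟩
  obtain ⟨Z, hZ, hsplit⟩ := hκ.exists_not_almostSub_and_not_almostSub_compl hι
    fun i _ hd => hU.inter_Ico_nonempty (hmem _ (hf i)) hd
  rcases U.mem_or_compl_mem Z hZ with hZU | hZU
  · obtain ⟨i, hi⟩ := hsmall Z hZU
    exact (hsplit i).2 hi
  · obtain ⟨i, hi⟩ := hsmall _ hZU
    exact (hsplit i).1 hi

theorem isComplete (hA : U.IsADGenSeq θ A) (hκ : κ.IsRegular) (hU : U.IsUniform) :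
    U.IsComplete := by
  have ⟨hmem, hdec, _, hbase⟩ := hA
  intro S hSne hSU hS
  have hidx (X : S) : ∃ i < θ, AlmostSub κ (A i) X := by
    obtain ⟨_, ⟨i, hi, rfl⟩, hiX⟩ := hbase X (hSU X.2)
    exact ⟨i, hi, hiX⟩
  choose idx hidxθ hidx using hidx
  obtain ⟨j, hj, hle⟩ := hA.exists_forall_le hκ hU (by rwa [Cardinal.lift_id'.{u, u + 1}]) hidxθ
  exact hU.sInter_mem_of_almostSub hκ hSne hSU hS (hmem j hj) fun X hX =>
    (hdec _ j (hle ⟨X, hX⟩) hj).trans (hidx ⟨X, hX⟩)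

end IsADGenSeq

end UltrafilterOn

/-- a uniform ultrafilter on a regular uncountable cardinal `κ` with an
almost-decreasing generating sequence is `κ`-complete; in particular it is a `κ`-complete
nonprincipal ultrafilter on `κ`, so `κ` is a measurable cardinal. -/
theorem statement6 (κ : Cardinal.{u}) (hκreg : κ.IsRegular) (hκunc : ℵ₀ < κ)
    (U : UltrafilterOn κ) (hU : U.IsUniform)
    (h : ∃ (θord : Ordinal.{u}) (A : Ordinal.{u} → Set Ordinal.{u}), U.IsADGenSeq θord A) :
    U.IsComplete ∧ U.IsNonprincipal ∧ IsMeasurableCard κ := by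
  obtain ⟨θ, A, hA⟩ := h
  have hcomplete := hA.isComplete hκreg hU
  have hnonprincipal := hU.isNonprincipal (one_lt_aleph0.trans hκunc)
  exact ⟨hcomplete, hnonprincipal, hκunc, U, hcomplete, hnonprincipal⟩
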